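/- arXiv:2103.11065 — 3 statements merged into one kernel-verified Lean document; each statement's English description precedes it below -/
import Mathlib

section
/- There exists a unique vector V* : S → ℝ satisfying V* = T V*, i.e., the Bellman optimality operator T has exactly one fixed point. -/
open Finset Filter

noncomputable def supNorm {S : Type*} [Fintype S] [Nonempty S] (V : S → ℝ) : ℝ :=
  Finset.univ.sup' Finset.univ_nonempty fun s => |V s|

noncomputable def bellmanT {S A : Type*} [Fintype S] [Fintype A] [Nonempty A]
    (P R : S → A → S → ℝ) (γ : ℝ) (V : S → ℝ) : S → ℝ :=
  fun s => Finset.univ.sup' Finset.univ_nonempty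
    fun a => ∑ s', P s a s' * (R s a s' + γ * V s')

lemma sup'_dist_le {A : Type*} [Fintype A] [Nonempty A] (f g : A → ℝ) (c : ℝ)
    (h : ∀ a, |f a - g a| ≤ c) :
    |Finset.univ.sup' Finset.univ_nonempty f - Finset.univ.sup' Finset.univ_nonempty g| ≤ c := by
  rw [abs_sub_le_iff]
  constructor
  · rw [sub_le_iff_le_add]
    apply Finset.sup'_le
    intro a _
    calc f a ≤ g a + c := by have := (abs_sub_le_iff.mp (h a)).1; linarith
      _ ≤ c + _ := by linarith [Finset.le_sup' g (Finset.mem_univ a)]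
  · rw [sub_le_iff_le_add]
    apply Finset.sup'_le
    intro a _
    calc g a ≤ f a + c := by have := (abs_sub_le_iff.mp (h a)).2; linarith
      _ ≤ c + _ := by linarith [Finset.le_sup' f (Finset.mem_univ a)]

theorem bellman_unique_fixed_point (n : ℕ) [NeZero n] (A : Type*) [Fintype A] [Nonempty A]
    (P R : Fin n → A → Fin n → ℝ)
    (hP0 : ∀ s a s', 0 ≤ P s a s') (hP1 : ∀ s a, ∑ s', P s a s' = 1)
    (γ : ℝ) (hγ0 : 0 ≤ γ) (hγ1 : γ < 1) :
    ∃! Vstar : Fin n → ℝ, bellmanT P R γ Vstar = Vstar := by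
  set K : NNReal := ⟨γ, hγ0⟩ with hK
  have hlip : LipschitzWith K (bellmanT P R γ) := by
    apply LipschitzWith.of_dist_le_mul
    intro U V
    have hKγ : (K : ℝ) = γ := rfl
    rw [dist_pi_le_iff (by positivity)]
    intro s
    rw [Real.dist_eq]
    apply sup'_dist_le
    intro a
    have hsum : (∑ s', P s a s' * (R s a s' + γ * U s')) -
        (∑ s', P s a s' * (R s a s' + γ * V s')) = ∑ s', P s a s' * (γ * (U s' - V s')) := by
      rw [← Finset.sum_sub_distrib]
      congr 1; ext s'; ring
    rw [hsum, hKγ]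
    calc |∑ s', P s a s' * (γ * (U s' - V s'))|
        ≤ ∑ s', |P s a s' * (γ * (U s' - V s'))| := Finset.abs_sum_le_sum_abs _ _
      _ ≤ ∑ s', P s a s' * (γ * dist U V) := by
          apply Finset.sum_le_sum
          intro s' _
          rw [abs_mul, abs_of_nonneg (hP0 s a s'), abs_mul, abs_of_nonneg hγ0]
          gcongr
          · exact hP0 s a s'
          · rw [← Real.dist_eq]; exact dist_le_pi_dist U V s'
      _ = γ * dist U V := by rw [← Finset.sum_mul, hP1, one_mul]
  have hc : ContractingWith K (bellmanT P R γ) := ⟨by exact_mod_cast hγ1, hlip⟩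
  refine ⟨hc.fixedPoint (bellmanT P R γ), ?_, ?_⟩
  · exact hc.fixedPoint_isFixedPt
  · intro V hV
    exact hc.fixedPoint_unique hV
end

section
/- For every vector V : S → ℝ, the value-iteration sequence of iterates T^k V converges (in the sup norm on S → ℝ) as k → ∞ to the unique fixed point V* of T. -/
open Finset Filter

/-! Taking a maximum over actions and averaging against a probability vector are both
1-Lipschitz for the sup norm, so `bellmanT` is a `γ`-contraction of `Fin n → ℝ`; by the Banach
fixed point theorem its iterates converge to its unique fixed point. -/

theorem Finset.abs_sup'_sub_sup'_le {ι α : Type*} [AddCommGroup α] [LinearOrder α]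
    [IsOrderedAddMonoid α] {s : Finset ι} (hs : s.Nonempty) {f g : ι → α} {c : α}
    (h : ∀ i ∈ s, |f i - g i| ≤ c) : |s.sup' hs f - s.sup' hs g| ≤ c := by
  rw [abs_sub_le_iff, sub_le_iff_le_add, sub_le_iff_le_add]
  constructor
  · refine sup'_le _ _ fun i hi => ?_
    have := (abs_sub_le_iff.1 (h i hi)).1
    calc f i ≤ c + g i := by rwa [sub_le_iff_le_add] at this
      _ ≤ c + s.sup' hs g := add_le_add_right (le_sup' g hi) c
  · refine sup'_le _ _ fun i hi => ?_
    have := (abs_sub_le_iff.1 (h i hi)).2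
    calc g i ≤ c + f i := by rwa [sub_le_iff_le_add] at this
      _ ≤ c + s.sup' hs f := add_le_add_right (le_sup' f hi) c

theorem abs_sum_mul_sub_sum_mul_le {ι : Type*} {s : Finset ι} {w f g : ι → ℝ} {c : ℝ}
    (hw₀ : ∀ i ∈ s, 0 ≤ w i) (hw₁ : ∑ i ∈ s, w i = 1) (h : ∀ i ∈ s, |f i - g i| ≤ c) :
    |∑ i ∈ s, w i * f i - ∑ i ∈ s, w i * g i| ≤ c :=
  calc |∑ i ∈ s, w i * f i - ∑ i ∈ s, w i * g i|
      = |∑ i ∈ s, w i * (f i - g i)| := by simp only [mul_sub, sum_sub_distrib]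
    _ ≤ ∑ i ∈ s, w i * |f i - g i| := by
        refine (abs_sum_le_sum_abs _ _).trans (sum_le_sum fun i hi => ?_)
        rw [abs_mul, abs_of_nonneg (hw₀ i hi)]
    _ ≤ ∑ i ∈ s, w i * c := sum_le_sum fun i hi => mul_le_mul_of_nonneg_left (h i hi) (hw₀ i hi)
    _ = c := by rw [← sum_mul, hw₁, one_mul]

theorem supNorm_eq_norm {S : Type*} [Fintype S] [Nonempty S] (V : S → ℝ) :
    supNorm V = ‖V‖ := by
  refine le_antisymm (sup'_le _ _ fun s _ => norm_le_pi_norm V s) ?_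
  refine (pi_norm_le_iff_of_nonneg ?_).2 fun s => le_sup' (fun s => |V s|) (mem_univ s)
  exact (abs_nonneg _).trans (le_sup' (fun s => |V s|) (mem_univ (Classical.arbitrary S)))

theorem lipschitzWith_bellmanT {S A : Type*} [Fintype S] [Fintype A] [Nonempty A]
    {P : S → A → S → ℝ} (hP₀ : ∀ s a s', 0 ≤ P s a s') (hP₁ : ∀ s a, ∑ s', P s a s' = 1)
    (R : S → A → S → ℝ) {γ : ℝ} (hγ : 0 ≤ γ) :
    LipschitzWith ⟨γ, hγ⟩ (bellmanT P R γ) := by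
  refine LipschitzWith.of_dist_le_mul fun V W => (dist_pi_le_iff (by positivity)).2 fun s => ?_
  refine abs_sup'_sub_sup'_le _ fun a _ =>
    abs_sum_mul_sub_sum_mul_le (fun s' _ => hP₀ s a s') (hP₁ s a) fun s' _ => ?_
  calc |R s a s' + γ * V s' - (R s a s' + γ * W s')| = γ * dist (V s') (W s') := by
        rw [add_sub_add_left_eq_sub, ← mul_sub, abs_mul, abs_of_nonneg hγ, Real.dist_eq]
    _ ≤ γ * dist V W := mul_le_mul_of_nonneg_left (dist_le_pi_dist V W s') hγ

theorem value_iteration_converges (n : ℕ) [NeZero n] (A : Type*) [Fintype A] [Nonempty A]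
    (P R : Fin n → A → Fin n → ℝ)
    (hP0 : ∀ s a s', 0 ≤ P s a s') (hP1 : ∀ s a, ∑ s', P s a s' = 1)
    (γ : ℝ) (hγ0 : 0 ≤ γ) (hγ1 : γ < 1)
    (Vstar : Fin n → ℝ) (hfix : bellmanT P R γ Vstar = Vstar) :
    ∀ V : Fin n → ℝ,
      Filter.Tendsto (fun k : ℕ => supNorm ((bellmanT P R γ)^[k] V - Vstar))
        Filter.atTop (nhds 0) := by
  intro V
  have hT : ContractingWith ⟨γ, hγ0⟩ (bellmanT P R γ) :=
    ⟨by exact_mod_cast hγ1, lipschitzWith_bellmanT hP0 hP1 R hγ0⟩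
  have hlim := hT.tendsto_iterate_fixedPoint V
  rw [← hT.fixedPoint_unique (x := Vstar) hfix] at hlim
  simpa only [supNorm_eq_norm] using tendsto_iff_norm_sub_tendsto_zero.1 hlim
end

section
/- Composite asynchronous updates over a full sweep form a γ-contraction: let (σ_k)_{k∈ℕ} be a sequence of states and let k ≤ k' be indices such that every state s ∈ S appears among σ_k, σ_{k+1}, …, σ_{k'−1}. Then for all vectors V, V̄ : S → ℝ, ‖(F_{σ_{k'−1}} ∘ ⋯ ∘ F_{σ_k}) V − (F_{σ_{k'−1}} ∘ ⋯ ∘ F_{σ_k}) V̄‖∞ ≤ γ ‖V − V̄‖∞. -/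
open Finset Filter

noncomputable def asyncF {S A : Type*} [Fintype S] [Nonempty S] [DecidableEq S]
    [Fintype A] [Nonempty A]
    (P R : S → A → S → ℝ) (γ : ℝ) (σ : S) (V : S → ℝ) : S → ℝ :=
  fun s => if s = σ then bellmanT P R γ V s else V s


noncomputable def iterGen {S : Type*} (G : ℕ → (S → ℝ) → S → ℝ) (k : ℕ) :
    ℕ → (S → ℝ) → S → ℝ
  | 0, V => V
  | m + 1, V => G (k + m) (iterGen G k m V)

section aux

variable {S A : Type*} [Fintype S] [Nonempty S] [DecidableEq S] [Fintype A] [Nonempty A]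

lemma supNorm_le {V : S → ℝ} {c : ℝ} (h : ∀ s, |V s| ≤ c) : supNorm V ≤ c :=
  Finset.sup'_le _ _ fun s _ => h s

lemma le_supNorm (V : S → ℝ) (s : S) : |V s| ≤ supNorm V := by
  unfold supNorm; exact Finset.le_sup' (fun s => |V s|) (Finset.mem_univ s)

lemma supNorm_nonneg (V : S → ℝ) : 0 ≤ supNorm V :=
  le_trans (abs_nonneg _) (le_supNorm V (Classical.arbitrary S))

lemma bellmanT_sub_le (P R : S → A → S → ℝ)
    (hP0 : ∀ s a s', 0 ≤ P s a s') (hP1 : ∀ s a, ∑ s', P s a s' = 1)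
    (γ : ℝ) (hγ0 : 0 ≤ γ) (V W : S → ℝ) (s : S) :
    bellmanT P R γ V s - bellmanT P R γ W s ≤ γ * supNorm (V - W) := by
  unfold bellmanT
  rw [sub_le_iff_le_add]
  apply Finset.sup'_le
  intro a _
  have h2 : ∑ s', P s a s' * (R s a s' + γ * V s')
      - ∑ s', P s a s' * (R s a s' + γ * W s')
      ≤ γ * supNorm (V - W) := by
    rw [← Finset.sum_sub_distrib]
    have : ∀ s' : S, P s a s' * (R s a s' + γ * V s') - P s a s' * (R s a s' + γ * W s')
        = P s a s' * (γ * (V s' - W s')) := fun s' => by ring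
    simp_rw [this]
    calc ∑ s', P s a s' * (γ * (V s' - W s'))
        ≤ ∑ s', P s a s' * (γ * supNorm (V - W)) := by
          apply Finset.sum_le_sum
          intro s' _
          apply mul_le_mul_of_nonneg_left _ (hP0 s a s')
          apply mul_le_mul_of_nonneg_left _ hγ0
          calc V s' - W s' ≤ |V s' - W s'| := le_abs_self _
            _ = |(V - W) s'| := rfl
            _ ≤ supNorm (V - W) := le_supNorm _ _
      _ = γ * supNorm (V - W) := by rw [← Finset.sum_mul, hP1]; ring
  have h3 : ∑ s', P s a s' * (R s a s' + γ * W s') ≤ Finset.univ.sup' Finset.univ_nonempty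
      fun a => ∑ s', P s a s' * (R s a s' + γ * W s') :=
    Finset.le_sup' (fun a => ∑ s', P s a s' * (R s a s' + γ * W s')) (Finset.mem_univ a)
  linarith

lemma bellmanT_contract (P R : S → A → S → ℝ)
    (hP0 : ∀ s a s', 0 ≤ P s a s') (hP1 : ∀ s a, ∑ s', P s a s' = 1)
    (γ : ℝ) (hγ0 : 0 ≤ γ) (V W : S → ℝ) (s : S) :
    |bellmanT P R γ V s - bellmanT P R γ W s| ≤ γ * supNorm (V - W) := by
  rw [abs_sub_le_iff]
  constructor
  · exact bellmanT_sub_le P R hP0 hP1 γ hγ0 V W s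
  · have := bellmanT_sub_le P R hP0 hP1 γ hγ0 W V s
    have hnorm : supNorm (W - V) = supNorm (V - W) := by
      unfold supNorm
      congr 1
      ext s'
      rw [Pi.sub_apply, Pi.sub_apply, abs_sub_comm]
    rwa [hnorm] at this

lemma async_invariant (P R : S → A → S → ℝ)
    (hP0 : ∀ s a s', 0 ≤ P s a s') (hP1 : ∀ s a, ∑ s', P s a s' = 1)
    (γ : ℝ) (hγ0 : 0 ≤ γ) (hγ1 : γ < 1)
    (σ : ℕ → S) (k : ℕ) (V W : S → ℝ) :
    ∀ m, ∀ s,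
      |iterGen (fun j => asyncF P R γ (σ j)) k m V s -
        iterGen (fun j => asyncF P R γ (σ j)) k m W s| ≤ supNorm (V - W) ∧
      ((∃ j, k ≤ j ∧ j < k + m ∧ σ j = s) →
        |iterGen (fun j => asyncF P R γ (σ j)) k m V s -
          iterGen (fun j => asyncF P R γ (σ j)) k m W s| ≤ γ * supNorm (V - W)) := by
  intro m
  induction m with
  | zero =>
    intro s
    constructor
    · exact le_supNorm (V - W) s
    · rintro ⟨j, hj1, hj2, _⟩; omega
  | succ m ih =>
    intro s
    have hsup : supNorm (iterGen (fun j => asyncF P R γ (σ j)) k m V -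
        iterGen (fun j => asyncF P R γ (σ j)) k m W) ≤ supNorm (V - W) :=
      supNorm_le fun s' => (ih s').1
    by_cases hs : s = σ (k + m)
    · have hbell : |iterGen (fun j => asyncF P R γ (σ j)) k (m+1) V s -
          iterGen (fun j => asyncF P R γ (σ j)) k (m+1) W s| ≤ γ * supNorm (V - W) := by
        show |asyncF P R γ (σ (k+m)) _ s - asyncF P R γ (σ (k+m)) _ s| ≤ _
        unfold asyncF
        rw [if_pos hs, if_pos hs]
        calc |bellmanT P R γ _ s - bellmanT P R γ _ s|
            ≤ γ * supNorm (iterGen (fun j => asyncF P R γ (σ j)) k m V -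
                iterGen (fun j => asyncF P R γ (σ j)) k m W) :=
              bellmanT_contract P R hP0 hP1 γ hγ0 _ _ s
          _ ≤ γ * supNorm (V - W) := by
              apply mul_le_mul_of_nonneg_left hsup hγ0
      refine ⟨hbell.trans ?_, fun _ => hbell⟩
      nlinarith [supNorm_nonneg (V - W)]
    · have heq : ∀ U : S → ℝ, iterGen (fun j => asyncF P R γ (σ j)) k (m+1) U s =
          iterGen (fun j => asyncF P R γ (σ j)) k m U s := by
        intro U
        show asyncF P R γ (σ (k+m)) _ s = _
        unfold asyncF
        rw [if_neg hs]
      rw [heq, heq]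
      refine ⟨(ih s).1, ?_⟩
      rintro ⟨j, hj1, hj2, hj3⟩
      apply (ih s).2
      refine ⟨j, hj1, ?_, hj3⟩
      rcases Nat.lt_succ_iff_lt_or_eq.mp hj2 with h | h
      · exact h
      · exfalso; exact hs (by rw [← hj3]; congr 1)

end aux

theorem async_sweep_contraction (n : ℕ) [NeZero n] (A : Type*) [Fintype A] [Nonempty A]
    (P R : Fin n → A → Fin n → ℝ)
    (hP0 : ∀ s a s', 0 ≤ P s a s') (hP1 : ∀ s a, ∑ s', P s a s' = 1)
    (γ : ℝ) (hγ0 : 0 ≤ γ) (hγ1 : γ < 1)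
    (σ : ℕ → Fin n) (k k' : ℕ) (hk : k ≤ k')
    (hcover : ∀ s : Fin n, ∃ j, k ≤ j ∧ j < k' ∧ σ j = s) :
    ∀ V Vbar : Fin n → ℝ,
      supNorm (iterGen (fun j => asyncF P R γ (σ j)) k (k' - k) V -
          iterGen (fun j => asyncF P R γ (σ j)) k (k' - k) Vbar) ≤
        γ * supNorm (V - Vbar) := by
  intro V Vbar
  apply supNorm_le
  intro s
  rw [Pi.sub_apply]
  apply (async_invariant P R hP0 hP1 γ hγ0 hγ1 σ k V Vbar (k' - k) s).2
  obtain ⟨j, hj1, hj2, hj3⟩ := hcover s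
  exact ⟨j, hj1, by omega, hj3⟩
end
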